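/- (Proposition 4.6: η'₂ is unfaithful.) Let n ≥ 3 and f, w, y, v ∈ ℂ with f ≠ 0, v ≠ 0, and w² − f²·y² ≠ 0, and let ρ : VST_n → GL_n(ℂ) be the group homomorphism with ρ(s_i) = L_i(!![0, f; f⁻¹, 0]), ρ(τ_i) = L_i(!![w, f²·y; y, w]), ρ(ν_i) = L_i(!![0, v; v⁻¹, 0]) for all 1 ≤ i ≤ n−1. Then ρ is not injective: there exists g ∈ VST_n with g ≠ 1 and ρ(g) = 1 (for instance g = (s₁ s₂)³, which is nontrivial in VST_n but satisfies ρ((s₁s₂)³) = 1). -/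

import Mathlib

/-- Generator type for the virtual singular twin group `VST_n`:
three copies of `Fin (n-1)`, for the generators `s_i`, `τ_i`, `ν_i`. -/
abbrev VSTGen (n : ℕ) := Fin (n - 1) ⊕ Fin (n - 1) ⊕ Fin (n - 1)

def vstS (n : ℕ) (i : Fin (n - 1)) : FreeGroup (VSTGen n) := FreeGroup.of (Sum.inl i)
def vstT (n : ℕ) (i : Fin (n - 1)) : FreeGroup (VSTGen n) := FreeGroup.of (Sum.inr (Sum.inl i))
def vstN (n : ℕ) (i : Fin (n - 1)) : FreeGroup (VSTGen n) := FreeGroup.of (Sum.inr (Sum.inr i))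

def vstAdj {n : ℕ} (i j : Fin (n - 1)) : Prop := i.val + 1 = j.val ∨ j.val + 1 = i.val
def vstFar {n : ℕ} (i j : Fin (n - 1)) : Prop := i.val + 2 ≤ j.val ∨ j.val + 2 ≤ i.val

/-- The defining relations of the virtual singular twin group `VST_n`. -/
def vstRels (n : ℕ) : Set (FreeGroup (VSTGen n)) :=
  {r | (∃ i, r = vstS n i * vstS n i) ∨
       (∃ i, r = vstN n i * vstN n i) ∨
       (∃ i, r = vstT n i * vstS n i * (vstS n i * vstT n i)⁻¹) ∨
       (∃ i j, vstAdj i j ∧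
          r = vstS n i * vstS n j * vstT n i * (vstT n j * vstS n i * vstS n j)⁻¹) ∨
       (∃ i j, vstAdj i j ∧
          r = vstN n i * vstN n j * vstN n i * (vstN n j * vstN n i * vstN n j)⁻¹) ∨
       (∃ i j, vstAdj i j ∧
          r = vstN n i * vstS n j * vstN n i * (vstN n j * vstS n i * vstN n j)⁻¹) ∨
       (∃ i j, vstAdj i j ∧
          r = vstN n i * vstT n j * vstN n i * (vstN n j * vstT n i * vstN n j)⁻¹) ∨
       (∃ i j, vstFar i j ∧
          ∃ g ∈ ({vstS n, vstT n, vstN n} : Set (Fin (n - 1) → FreeGroup (VSTGen n))),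
          ∃ h ∈ ({vstS n, vstT n, vstN n} : Set (Fin (n - 1) → FreeGroup (VSTGen n))),
            r = g i * h j * (h j * g i)⁻¹)}

/-- The virtual singular twin group `VST_n`. -/
abbrev VST (n : ℕ) := PresentedGroup (vstRels n)

/-- `Lmat n i M` is the `n × n` matrix agreeing with the identity outside rows and
columns `i, i+1` (0-indexed), with `2 × 2` block `M` there. -/
def Lmat {R : Type*} [Zero R] [One R] (n : ℕ) (i : ℕ) (M : Matrix (Fin 2) (Fin 2) R) :
    Matrix (Fin n) (Fin n) R :=
  Matrix.of fun a b =>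
    if a.val = i ∧ b.val = i then M 0 0
    else if a.val = i ∧ b.val = i + 1 then M 0 1
    else if a.val = i + 1 ∧ b.val = i then M 1 0
    else if a.val = i + 1 ∧ b.val = i + 1 then M 1 1
    else if a.val = b.val then 1 else 0

/-!
The images `ρ(s_i) = L_i(S)`, `S = !![0, f; f⁻¹, 0]`, are involutions, and consecutive ones
satisfy the braid relation: conjugating `L_{k+1}(M)` by `L_k(S)` gives the same matrix as
conjugating `L_k(M)` by `L_{k+1}(S)`, for every `M`. Involutions `a`, `b` with `aba = bab` satisfy
`(ab)³ = 1`, so `ρ` kills `(s₁ s₂)³`.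

This element is nontrivial in `VST_n`: for every involution `A`, the assignment
`s_i ↦ L_i(A)`, `τ_i ↦ 1`, `ν_i ↦ L_i(!![0, 1; 1, 0])` respects the defining relations, and for
`A = diag(1, -1)` it sends `s₁ s₂` to `diag(1, -1, -1, 1, …, 1)`, whose cube is not `1`.
-/

lemma mul_pow_three_eq_one_of_braid {M : Type*} [Monoid M] {a b : M} (ha : a * a = 1)
    (hb : b * b = 1) (hab : a * b * a = b * a * b) : (a * b) ^ 3 = 1 := by
  calc (a * b) ^ 3 = a * b * a * (b * a * b) := by
        simp only [pow_succ, pow_zero, one_mul, mul_assoc]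
    _ = a * b * (a * a) * b * a := by rw [← hab]; simp only [mul_assoc]
    _ = 1 := by rw [ha, mul_one, mul_assoc a b b, hb, mul_one, ha]

section Lmat

variable {R : Type*} [CommRing R] {n : ℕ}

lemma Lmat_apply (i : ℕ) (M : Matrix (Fin 2) (Fin 2) R) (a b : Fin n) :
    Lmat n i M a b =
      if a.val = i ∧ b.val = i then M 0 0
      else if a.val = i ∧ b.val = i + 1 then M 0 1
      else if a.val = i + 1 ∧ b.val = i then M 1 0
      else if a.val = i + 1 ∧ b.val = i + 1 then M 1 1
      else if a.val = b.val then 1 else 0 := rfl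

lemma Lmat_mul_apply {i : ℕ} (h : i + 1 < n) (M : Matrix (Fin 2) (Fin 2) R)
    (X : Matrix (Fin n) (Fin n) R) (a b : Fin n) :
    (Lmat n i M * X) a b =
      if a.val = i then M 0 0 * X ⟨i, by omega⟩ b + M 0 1 * X ⟨i + 1, h⟩ b
      else if a.val = i + 1 then M 1 0 * X ⟨i, by omega⟩ b + M 1 1 * X ⟨i + 1, h⟩ b
      else X a b := by
  have hne : (⟨i, by omega⟩ : Fin n) ≠ ⟨i + 1, h⟩ := by simp
  rw [Matrix.mul_apply]
  split_ifs with hi hi'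
  · rw [Fintype.sum_eq_add _ _ hne]
    · simp [Lmat_apply, hi]
    · intro c hc
      simp only [ne_eq, Fin.ext_iff] at hc
      simp [Lmat_apply, hi, hc, Ne.symm hc.1]
  · rw [Fintype.sum_eq_add _ _ hne]
    · simp [Lmat_apply, hi']
    · intro c hc
      simp only [ne_eq, Fin.ext_iff] at hc
      simp [Lmat_apply, hi', hc, Ne.symm hc.2]
  · rw [Fintype.sum_eq_single a]
    · simp [Lmat_apply, hi, hi']
    · intro c hc
      simp only [ne_eq, Fin.ext_iff] at hc
      simp [Lmat_apply, hi, hi', Ne.symm hc]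

@[simp]
lemma Lmat_one (i : ℕ) : Lmat n i (1 : Matrix (Fin 2) (Fin 2) R) = 1 := by
  ext a b
  simp only [Lmat_apply, Matrix.one_apply, Fin.ext_iff]
  split_ifs <;> simp_all <;> omega

lemma Lmat_mul {i : ℕ} (h : i + 1 < n) (A B : Matrix (Fin 2) (Fin 2) R) :
    Lmat n i A * Lmat n i B = Lmat n i (A * B) := by
  have : i + 1 ≠ i := by omega
  ext a b
  simp only [Lmat_mul_apply h, Lmat_apply, Matrix.mul_apply, Fin.sum_univ_two, this, this.symm,
    true_and, false_and, if_false]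
  split_ifs <;> first | omega | ring

lemma Lmat_mul_self_eq_one {i : ℕ} (h : i + 1 < n) {A : Matrix (Fin 2) (Fin 2) R}
    (hA : A * A = 1) : Lmat n i A * Lmat n i A = 1 := by
  rw [Lmat_mul h, hA, Lmat_one]

lemma Lmat_sub_one_apply_eq_zero {i : ℕ} (M : Matrix (Fin 2) (Fin 2) R) {a b : Fin n}
    (h : (a.val ≠ i ∧ a.val ≠ i + 1) ∨ (b.val ≠ i ∧ b.val ≠ i + 1)) :
    (Lmat n i M - 1) a b = 0 := by
  simp only [Matrix.sub_apply, Lmat_apply, Matrix.one_apply, Fin.ext_iff]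
  split_ifs <;> first | omega | simp

lemma Lmat_sub_one_mul_Lmat_sub_one_eq_zero {i j : ℕ} (hij : i + 2 ≤ j ∨ j + 2 ≤ i)
    (A B : Matrix (Fin 2) (Fin 2) R) : (Lmat n i A - 1) * (Lmat n j B - 1) = 0 := by
  ext a b
  rw [Matrix.mul_apply, Matrix.zero_apply]
  refine Finset.sum_eq_zero fun c _ => ?_
  by_cases hc : c.val = i ∨ c.val = i + 1
  · rw [Lmat_sub_one_apply_eq_zero B (Or.inl (by omega)), mul_zero]
  · rw [Lmat_sub_one_apply_eq_zero A (Or.inr (by omega)), zero_mul]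

lemma Lmat_commute {i j : ℕ} (hij : i + 2 ≤ j ∨ j + 2 ≤ i) (A B : Matrix (Fin 2) (Fin 2) R) :
    Commute (Lmat n i A) (Lmat n j B) := by
  have hXY : Commute (Lmat n i A - 1) (Lmat n j B - 1) :=
    (Lmat_sub_one_mul_Lmat_sub_one_eq_zero hij A B).trans
      (Lmat_sub_one_mul_Lmat_sub_one_eq_zero hij.symm B A).symm
  simpa using (hXY.add_right (Commute.one_right _)).add_left (Commute.one_left _)

end Lmat

section Lmat_antidiag

variable {R : Type*} [CommRing R] {n : ℕ} {p q : R}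

set_option maxHeartbeats 800000 in
lemma Lmat_antidiag_conj_succ {k : ℕ} (h : k + 2 < n) (hpq : p * q = 1)
    (M : Matrix (Fin 2) (Fin 2) R) :
    Lmat n k !![0, p; q, 0] * Lmat n (k + 1) M * Lmat n k !![0, p; q, 0] =
      Lmat n (k + 1) !![0, p; q, 0] * Lmat n k M * Lmat n (k + 1) !![0, p; q, 0] := by
  have h₁ : k ≠ k + 1 := by omega
  have h₂ : k ≠ k + 1 + 1 := by omega
  have h₃ : k + 1 ≠ k + 1 + 1 := by omega
  ext a b
  simp only [mul_assoc, Lmat_mul_apply h, Lmat_mul_apply (show k + 1 < n by omega), Lmat_apply,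
    h₁, h₂, h₃, h₁.symm, h₂.symm, h₃.symm, true_and, false_and, if_false, if_true,
    Matrix.of_apply, Matrix.cons_val', Matrix.cons_val_zero, Matrix.cons_val_one,
    Matrix.empty_val', Matrix.cons_val_fin_one]
  split_ifs <;> first | omega | grind

lemma antidiag_mul_self (hpq : p * q = 1) : !![0, p; q, 0] * !![0, p; q, 0] = 1 := by
  rw [Matrix.mul_fin_two, Matrix.one_fin_two, hpq, mul_comm q p, hpq]
  simp

lemma Lmat_antidiag_conj {i j : ℕ} (hi : i + 1 < n) (hj : j + 1 < n) (hij : i + 1 = j ∨ j + 1 = i)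
    (hpq : p * q = 1) (M : Matrix (Fin 2) (Fin 2) R) :
    Lmat n i !![0, p; q, 0] * Lmat n j M * Lmat n i !![0, p; q, 0] =
      Lmat n j !![0, p; q, 0] * Lmat n i M * Lmat n j !![0, p; q, 0] := by
  rcases hij with rfl | rfl
  · exact Lmat_antidiag_conj_succ hj hpq M
  · exact (Lmat_antidiag_conj_succ hi hpq M).symm

lemma Lmat_antidiag_mul_pow_three_eq_one {k : ℕ} (h : k + 2 < n) (hpq : p * q = 1) :
    (Lmat n k !![0, p; q, 0] * Lmat n (k + 1) !![0, p; q, 0]) ^ 3 = 1 :=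
  mul_pow_three_eq_one_of_braid (Lmat_mul_self_eq_one (by omega) (antidiag_mul_self hpq))
    (Lmat_mul_self_eq_one h (antidiag_mul_self hpq)) (Lmat_antidiag_conj_succ h hpq _)

end Lmat_antidiag

section Representation

variable {R : Type*} [CommRing R] {n : ℕ}

def lmatUnit (i : Fin (n - 1)) (B : Matrix (Fin 2) (Fin 2) R) (hB : B * B = 1) :
    Matrix.GeneralLinearGroup (Fin n) R :=
  ⟨Lmat n i B, Lmat n i B, Lmat_mul_self_eq_one (by omega) hB,
    Lmat_mul_self_eq_one (by omega) hB⟩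

@[simp]
lemma lmatUnit_val (i : Fin (n - 1)) (B : Matrix (Fin 2) (Fin 2) R) (hB : B * B = 1) :
    (lmatUnit i B hB : Matrix (Fin n) (Fin n) R) = Lmat n i B := rfl

lemma lmatUnit_one (i : Fin (n - 1)) : lmatUnit i (1 : Matrix (Fin 2) (Fin 2) R) (mul_one 1) = 1 :=
  Units.ext (Lmat_one _)

lemma lmatUnit_mul_self (i : Fin (n - 1)) (B : Matrix (Fin 2) (Fin 2) R) (hB : B * B = 1) :
    lmatUnit i B hB * lmatUnit i B hB = 1 :=
  Units.ext (Lmat_mul_self_eq_one (by omega) hB)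

lemma lmatUnit_swap_conj {i j : Fin (n - 1)} (hij : vstAdj i j) (B : Matrix (Fin 2) (Fin 2) R)
    (hB : B * B = 1) :
    lmatUnit i !![0, 1; 1, 0] (antidiag_mul_self (mul_one 1)) * lmatUnit j B hB *
        lmatUnit i !![0, 1; 1, 0] (antidiag_mul_self (mul_one 1)) =
      lmatUnit j !![0, 1; 1, 0] (antidiag_mul_self (mul_one 1)) * lmatUnit i B hB *
        lmatUnit j !![0, 1; 1, 0] (antidiag_mul_self (mul_one 1)) :=
  Units.ext (Lmat_antidiag_conj (by omega) (by omega) hij (mul_one 1) B)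

lemma lmatUnit_commute {i j : Fin (n - 1)} (hij : vstFar i j) {A B : Matrix (Fin 2) (Fin 2) R}
    {hA : A * A = 1} {hB : B * B = 1} : Commute (lmatUnit i A hA) (lmatUnit j B hB) :=
  Units.ext (Lmat_commute hij A B)

variable (n) in
/-- `τ_i` is sent to `L_i(1) = 1`, so that every generator goes to some `L_i(B)` and the
far-commutation relations are all instances of `lmatUnit_commute`. -/
def vstGenImage (A : Matrix (Fin 2) (Fin 2) R) (hA : A * A = 1) :
    VSTGen n → Matrix.GeneralLinearGroup (Fin n) R :=
  Sum.elim (fun i => lmatUnit i A hA)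
    (Sum.elim (fun i => lmatUnit i 1 (mul_one 1))
      (fun i => lmatUnit i !![0, 1; 1, 0] (antidiag_mul_self (mul_one 1))))

lemma lift_vstGenImage_eq_one (A : Matrix (Fin 2) (Fin 2) R) (hA : A * A = 1) :
    ∀ r ∈ vstRels n, FreeGroup.lift (vstGenImage n A hA) r = 1 := by
  rintro r (⟨i, rfl⟩ | ⟨i, rfl⟩ | ⟨i, rfl⟩ | ⟨i, j, -, rfl⟩ | ⟨i, j, hij, rfl⟩ | ⟨i, j, hij, rfl⟩ |
    ⟨i, j, hij, rfl⟩ | ⟨i, j, hij, g, hg, h, hh, rfl⟩)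
  on_goal 8 =>
    simp only [Set.mem_insert_iff, Set.mem_singleton_iff] at hg hh
    rcases hg with rfl | rfl | rfl <;> rcases hh with rfl | rfl | rfl
  all_goals
    simp only [vstS, vstT, vstN, map_mul, map_inv, FreeGroup.lift_apply_of, mul_inv_eq_one,
      vstGenImage, Sum.elim_inl, Sum.elim_inr, lmatUnit_one, lmatUnit_mul_self, mul_one, one_mul]
  all_goals first
    | exact lmatUnit_swap_conj hij _ _
    | exact lmatUnit_commute hij
    | rfl

variable (n) in
noncomputable def vstRepOfInvolution (A : Matrix (Fin 2) (Fin 2) R) (hA : A * A = 1) :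
    VST n →* Matrix.GeneralLinearGroup (Fin n) R :=
  PresentedGroup.toGroup (lift_vstGenImage_eq_one A hA)

end Representation

lemma Lmat_diag_mul_pow_three_apply {R : Type*} [CommRing R] {n k : ℕ} (h : k + 2 < n) :
    ((Lmat n k !![1, 0; 0, -1] * Lmat n (k + 1) !![1, 0; 0, -1]) ^ 3 :
      Matrix (Fin n) (Fin n) R) ⟨k + 1, by omega⟩ ⟨k + 1, by omega⟩ = -1 := by
  simp [pow_succ, mul_assoc, Lmat_mul_apply h, Lmat_mul_apply (show k + 1 < n by omega), Lmat_apply]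

lemma vst_of_mul_of_pow_three_ne_one {n k : ℕ} (hk : k + 2 < n) :
    (PresentedGroup.of (rels := vstRels n) (Sum.inl (⟨k, by omega⟩ : Fin (n - 1))) *
      PresentedGroup.of (Sum.inl (⟨k + 1, by omega⟩ : Fin (n - 1)))) ^ 3 ≠ 1 := by
  intro h
  have hD : !![1, 0; 0, -1] * !![1, 0; 0, -1] = (1 : Matrix (Fin 2) (Fin 2) ℤ) := by
    simp [Matrix.one_fin_two]
  have hcube := congrArg (fun g => (vstRepOfInvolution n _ hD g : Matrix (Fin n) (Fin n) ℤ)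
    ⟨k + 1, by omega⟩ ⟨k + 1, by omega⟩) h
  simp only [vstRepOfInvolution, map_pow, map_mul, map_one, PresentedGroup.toGroup.of, vstGenImage,
    Sum.elim_inl, Units.val_pow_eq_pow_val, Units.val_mul, Units.val_one, lmatUnit_val,
    Lmat_diag_mul_pow_three_apply hk, Matrix.one_apply_eq] at hcube
  norm_num at hcube

/-- (Proposition 4.6.) The representation `η'₂` of `VST_n` is unfaithful: the element
`(s₁ s₂)³` is nontrivial in `VST_n` but is mapped to the identity matrix. -/
theorem eta2_prime_unfaithful (n : ℕ) (hn : 3 ≤ n) (f : ℂ) (hf : f ≠ 0)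
    (ρ : VST n →* Matrix.GeneralLinearGroup (Fin n) ℂ)
    (hρs : ∀ i : Fin (n - 1),
      ((ρ (PresentedGroup.of (Sum.inl i)) : Matrix (Fin n) (Fin n) ℂ))
        = Lmat n i.val !![0, f; f⁻¹, 0]) :
    ¬ Function.Injective ρ ∧
    (PresentedGroup.of (rels := vstRels n) (Sum.inl (⟨0, by omega⟩ : Fin (n - 1))) *
        PresentedGroup.of (Sum.inl (⟨1, by omega⟩ : Fin (n - 1)))) ^ 3 ≠ 1 ∧
    ρ ((PresentedGroup.of (Sum.inl (⟨0, by omega⟩ : Fin (n - 1))) *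
        PresentedGroup.of (Sum.inl (⟨1, by omega⟩ : Fin (n - 1)))) ^ 3) = 1 := by
  have hne := vst_of_mul_of_pow_three_ne_one (n := n) (k := 0) (by omega)
  have hρ : ρ ((PresentedGroup.of (Sum.inl (⟨0, by omega⟩ : Fin (n - 1))) *
      PresentedGroup.of (Sum.inl (⟨1, by omega⟩ : Fin (n - 1)))) ^ 3) = 1 := by
    ext1
    simpa [hρs] using
      Lmat_antidiag_mul_pow_three_eq_one (n := n) (k := 0) (by omega) (mul_inv_cancel₀ hf)
  exact ⟨fun hinj => hne ((injective_iff_map_eq_one ρ).mp hinj _ hρ), hne, hρ⟩
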